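/- Let S₆ be the program over atoms a₀, a₁, a₂, a₃, a₄, a₅ consisting of the clauses a_{(i+1) mod 6} ← not(a_i) and a_{(i+2) mod 6} ← not(a_i) for i = 0, 1, 2, 3, 4, 5. Then S₆ has exactly three stable models, namely {a₀, a₁, a₃, a₄}, {a₁, a₂, a₄, a₅} and {a₂, a₃, a₅, a₀}. -/
import Mathlib


/-- A clause of a propositional logic program: an optional head (a definite
clause if `head = some h`, a constraint if `head = none`), a positive body
and a negative body. -/
structure LPClause (α : Type) where
  head : Option α
  pos : Finset α
  neg : Finset α
deriving DecidableEq

/-- A program is a finite set of clauses. -/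
abbrev LPProgram (α : Type) := Finset (LPClause α)

/-- The atoms occurring in a clause. -/
def LPClause.atoms {α : Type} [DecidableEq α] (c : LPClause α) : Finset α :=
  c.head.toFinset ∪ c.pos ∪ c.neg

/-- The atoms occurring in a program. -/
def LPProgram.atoms {α : Type} [DecidableEq α] (P : LPProgram α) : Finset α :=
  P.sup LPClause.atoms

/-- `N` is closed under the Horn rules of the reduct `P^M`: for every definite
clause of `P` whose negative body is disjoint from `M`, if its positive body
is contained in `N` then so is its head. -/
def ClosedUnder {α : Type} (P : LPProgram α) (M : Finset α) (N : Set α) : Prop :=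
  ∀ c ∈ P, ∀ h : α, c.head = some h → (∀ b ∈ c.neg, b ∉ M) →
    (↑c.pos : Set α) ⊆ N → h ∈ N

/-- `M` is a stable model of `P`: `M` is the least set closed under the rules
of the reduct `P^M` (i.e. `M = lm(P^M)`), and `M` satisfies every constraint
of `P`. -/
def IsStable {α : Type} (P : LPProgram α) (M : Finset α) : Prop :=
  ClosedUnder P M ↑M ∧ (∀ N : Set α, ClosedUnder P M N → ↑M ⊆ N) ∧
  ∀ c ∈ P, c.head = none → ¬(c.pos ⊆ M ∧ ∀ b ∈ c.neg, b ∉ M)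

def Good (M : Finset (Fin 6)) : Prop :=
  (∀ i : Fin 6, i ∉ M → (i + 1 ∈ M ∧ i + 2 ∈ M)) ∧
  (∀ j ∈ M, ∃ i : Fin 6, i ∉ M ∧ (j = i + 1 ∨ j = i + 2))

instance : DecidablePred Good := fun _ => by unfold Good; infer_instance

lemma stable_iff_good (P : LPProgram (Fin 6))
    (hP : ∀ c, c ∈ P ↔ ∃ i : Fin 6,
      c = ⟨some (i + 1), ∅, {i}⟩ ∨ c = ⟨some (i + 2), ∅, {i}⟩)
    (M : Finset (Fin 6)) : IsStable P M ↔ Good M := by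
  constructor
  · rintro ⟨hcl, hmin, -⟩
    constructor
    · intro i hi
      constructor
      · exact hcl _ ((hP _).2 ⟨i, Or.inl rfl⟩) _ rfl
          (by simp [hi]) (by simp)
      · exact hcl _ ((hP _).2 ⟨i, Or.inr rfl⟩) _ rfl
          (by simp [hi]) (by simp)
    · intro j hj
      have := hmin {j : Fin 6 | ∃ i : Fin 6, i ∉ M ∧ (j = i + 1 ∨ j = i + 2)}
        (by
          intro c hc h hh hneg _
          rcases (hP c).1 hc with ⟨i, hi | hi⟩ <;> subst hi <;>
            simp only [Option.some.injEq] at hh <;> subst hh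
          · exact ⟨i, hneg i (by simp), Or.inl rfl⟩
          · exact ⟨i, hneg i (by simp), Or.inr rfl⟩)
      exact this hj
  · rintro ⟨h1, h2⟩
    refine ⟨?_, ?_, ?_⟩
    · intro c hc h hh hneg _
      rcases (hP c).1 hc with ⟨i, hi | hi⟩ <;> subst hi <;>
        simp only [Option.some.injEq] at hh <;> subst hh
      · exact (h1 i (hneg i (by simp))).1
      · exact (h1 i (hneg i (by simp))).2
    · intro N hN j hj
      rcases h2 j hj with ⟨i, hi, rfl | rfl⟩
      · exact hN _ ((hP _).2 ⟨i, Or.inl rfl⟩) _ rfl (by simp [hi]) (by simp)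
      · exact hN _ ((hP _).2 ⟨i, Or.inr rfl⟩) _ rfl (by simp [hi]) (by simp)
    · intro c hc hnone
      rcases (hP c).1 hc with ⟨i, hi | hi⟩ <;> subst hi <;> simp at hnone

/-- The program `S₆` over atoms `a₀,…,a₅` (here elements of `Fin 6`), with
clauses `a_{i+1} ← not(a_i)` and `a_{i+2} ← not(a_i)` (indices mod 6), has
exactly three stable models: `{a₀,a₁,a₃,a₄}`, `{a₁,a₂,a₄,a₅}` and
`{a₂,a₃,a₅,a₀}`. -/
theorem stmt_17 (P : LPProgram (Fin 6))
    (hP : ∀ c, c ∈ P ↔ ∃ i : Fin 6,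
      c = ⟨some (i + 1), ∅, {i}⟩ ∨ c = ⟨some (i + 2), ∅, {i}⟩) :
    (∀ M : Finset (Fin 6), IsStable P M ↔
      M = {0, 1, 3, 4} ∨ M = {1, 2, 4, 5} ∨ M = {2, 3, 5, 0}) ∧
    {M : Finset (Fin 6) | IsStable P M}.ncard = 3 := by
  have key : ∀ M : Finset (Fin 6), IsStable P M ↔
      M = {0, 1, 3, 4} ∨ M = {1, 2, 4, 5} ∨ M = {2, 3, 5, 0} := by
    intro M
    rw [stable_iff_good P hP]
    revert M
    decide
  refine ⟨key, ?_⟩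
  have hset : {M : Finset (Fin 6) | IsStable P M} =
      (↑({{0, 1, 3, 4}, {1, 2, 4, 5}, {2, 3, 5, 0}} : Finset (Finset (Fin 6))) : Set (Finset (Fin 6))) := by
    ext M
    simp [key M]
  rw [hset, Set.ncard_coe_finset]
  decide
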